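/- The Penalized Brier Score is superior: for any probability vector x with arg max x equal to the true class i (so x_i ≥ 1/c and the penalty is 0) and any probability vector q with arg max q ≠ its true class j, we have S_PBS(x, i) ≤ (c-1)/c < S_PBS(q, j), since S_BS(x, i) ≤ (c-1)/c when x_i ≥ 1/c and S_PBS(q, j) = S_BS(q, j) + (c-1)/c > (c-1)/c whenever q ≠ the one-hot vector at j. -/

import Mathlib

/-- Penalized Brier Score of forecast `p` at outcome `i`. -/
noncomputable def SPBS (c : ℕ) (p : Fin c → ℝ) (i : Fin c) : ℝ :=
  ∑ j, (p j - (if j = i then (1 : ℝ) else 0)) ^ 2 +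
    (if ∀ k, p k ≤ p i then 0 else ((c : ℝ) - 1) / c)

/-!
For a correct prediction `x` the penalty vanishes, and expanding the square gives
`S_BS(x, i) = ∑ x_k² - 2 x_i + 1 ≤ x_i ∑ x_k - 2 x_i + 1 = 1 - x_i`, since `0 ≤ x_k ≤ x_i`.
As `x_i` is the largest of `c` numbers summing to `1`, `x_i ≥ 1/c`, so `S_PBS(x, i) ≤ (c-1)/c`.
A misclassified prediction pays the penalty `(c-1)/c` on top of a Brier score that is positive
unless the prediction is the one-hot vector of its class.
-/

open Finset

theorem sum_sq_le_mul_sum_of_forall_le {ι : Type*} [Fintype ι] {p : ι → ℝ} {i : ι}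
    (hp0 : ∀ k, 0 ≤ p k) (hmax : ∀ k, p k ≤ p i) : ∑ k, p k ^ 2 ≤ p i * ∑ k, p k := by
  rw [mul_sum]
  gcongr with k
  rw [sq]
  exact mul_le_mul_of_nonneg_right (hmax k) (hp0 k)

section BrierScore

variable {ι : Type*} [Fintype ι] [DecidableEq ι]

noncomputable def brierScore (p : ι → ℝ) (i : ι) : ℝ :=
  ∑ j, (p j - if j = i then 1 else 0) ^ 2

theorem brierScore_eq (p : ι → ℝ) (i : ι) :
    brierScore p i = ∑ j, p j ^ 2 - 2 * p i + 1 := by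
  have hterm : ∀ j, (p j - if j = i then 1 else 0) ^ 2
      = p j ^ 2 - 2 * (if j = i then p j else 0) + (if j = i then 1 else 0) := by
    intro j
    split_ifs <;> ring
  simp only [brierScore, hterm, sum_add_distrib, sum_sub_distrib, ← mul_sum, sum_ite_eq',
    mem_univ, if_true]

theorem brierScore_le_one_sub {p : ι → ℝ} {i : ι} (hp0 : ∀ k, 0 ≤ p k)
    (hsum : ∑ k, p k = 1) (hmax : ∀ k, p k ≤ p i) : brierScore p i ≤ 1 - p i := by
  have := sum_sq_le_mul_sum_of_forall_le hp0 hmax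
  rw [hsum, mul_one] at this
  rw [brierScore_eq]
  linarith

theorem brierScore_pos {p : ι → ℝ} {i : ι} (hp : p ≠ fun k => if k = i then 1 else 0) :
    0 < brierScore p i := by
  obtain ⟨k, hk⟩ := Function.ne_iff.mp hp
  exact sum_pos' (fun _ _ => sq_nonneg _)
    ⟨k, mem_univ k, pow_two_pos_of_ne_zero (sub_ne_zero.mpr hk)⟩

end BrierScore

theorem inv_card_le_of_forall_le {ι : Type*} [Fintype ι] {p : ι → ℝ} {i : ι}
    (hsum : ∑ k, p k = 1) (hmax : ∀ k, p k ≤ p i) : (Fintype.card ι : ℝ)⁻¹ ≤ p i := by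
  have hcard : (0 : ℝ) < Fintype.card ι := Nat.cast_pos.mpr (Fintype.card_pos_iff.mpr ⟨i⟩)
  have := sum_le_card_nsmul univ p (p i) fun k _ => hmax k
  rw [hsum, card_univ, nsmul_eq_mul] at this
  rwa [inv_le_iff_one_le_mul₀ hcard, mul_comm]

theorem SPBS_of_forall_le {c : ℕ} {p : Fin c → ℝ} {i : Fin c} (h : ∀ k, p k ≤ p i) :
    SPBS c p i = brierScore p i := by
  rw [SPBS, if_pos h, add_zero, brierScore]

theorem SPBS_of_exists_lt {c : ℕ} {p : Fin c → ℝ} {i : Fin c} (h : ∃ k, p i < p k) :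
    SPBS c p i = brierScore p i + ((c : ℝ) - 1) / c := by
  rw [SPBS, if_neg (by simpa using h), brierScore]

theorem PBS_superior_general (c : ℕ) (i j : Fin c) (x q : Fin c → ℝ)
    (hx0 : ∀ k, 0 ≤ x k) (hxsum : ∑ k, x k = 1)
    (hxmax : ∀ k, k ≠ i → x k < x i)
    (hqmis : ∃ k, q j < q k)
    (hqone : q ≠ fun k => if k = j then (1 : ℝ) else 0) :
    SPBS c x i ≤ ((c : ℝ) - 1) / c ∧ ((c : ℝ) - 1) / c < SPBS c q j := by
  have hxle : ∀ k, x k ≤ x i := fun k =>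
    (eq_or_ne k i).elim (fun h => h ▸ le_rfl) fun h => (hxmax k h).le
  have hc : (c : ℝ) ≠ 0 := Nat.cast_ne_zero.mpr (Fin.pos i).ne'
  have hxi : (c : ℝ)⁻¹ ≤ x i := by simpa using inv_card_le_of_forall_le hxsum hxle
  constructor
  · calc SPBS c x i = brierScore x i := SPBS_of_forall_le hxle
      _ ≤ 1 - x i := brierScore_le_one_sub hx0 hxsum hxle
      _ ≤ 1 - (c : ℝ)⁻¹ := by linarith
      _ = ((c : ℝ) - 1) / c := by field_simp
  · rw [SPBS_of_exists_lt hqmis]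
    linarith [brierScore_pos hqone]

/-- The Penalized Brier Score is superior: a correctly classified prediction `x`
(arg max at the true class `i`) satisfies `S_PBS(x, i) ≤ (c-1)/c`, while a
misclassified prediction `q` (arg max differing from its true class `j`, and `q` not
the one-hot vector at `j`) satisfies `S_PBS(q, j) > (c-1)/c`. -/
theorem PBS_superior (c : ℕ) (hc : 2 ≤ c) (i j : Fin c) (x q : Fin c → ℝ)
    (hx0 : ∀ k, 0 ≤ x k) (hxsum : ∑ k, x k = 1)
    (hxmax : ∀ k, k ≠ i → x k < x i)
    (hq0 : ∀ k, 0 ≤ q k) (hqsum : ∑ k, q k = 1)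
    (hqmis : ∃ k, q j < q k)
    (hqone : q ≠ fun k => if k = j then (1 : ℝ) else 0) :
    SPBS c x i ≤ ((c : ℝ) - 1) / c ∧ ((c : ℝ) - 1) / c < SPBS c q j :=
  PBS_superior_general c i j x q hx0 hxsum hxmax hqmis hqone
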